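/- arXiv:2603.17276 — 10 statements merged into one kernel-verified Lean document; each statement's English description precedes it below -/
import Mathlib

section
/- Let A = (A,·,∘) be a two-sided skew brace with |A| ≥ 3 such that the group (A,∘) is non-abelian. Then Aut(A) is non-trivial, i.e., there exists a bijection f : A → A with f ≠ id that is an automorphism of both (A,·) and (A,∘). -/
/-- A skew brace structure on a group `A` (whose given group operation `*` plays the
role of the "additive" operation `·`): a second group operation `circ` with the same
identity element `1`, satisfying the brace relation
`a ∘ (b · c) = (a ∘ b) · a⁻¹ · (a ∘ c)`. -/
structure SkewBraceStruct (A : Type*) [Group A] where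
  circ : A → A → A
  circInv : A → A
  circ_assoc : ∀ a b c, circ (circ a b) c = circ a (circ b c)
  one_circ : ∀ a, circ 1 a = a
  circ_one : ∀ a, circ a 1 = a
  circInv_circ : ∀ a, circ (circInv a) a = 1
  brace : ∀ a b c, circ a (b * c) = circ a b * a⁻¹ * circ a c

/-- `f` is an automorphism of the skew brace: a bijection that is an automorphism of
both `(A, ·)` and `(A, ∘)`. -/
def SkewBraceStruct.IsAut {A : Type*} [Group A] (S : SkewBraceStruct A) (f : A → A) : Prop :=
  Function.Bijective f ∧ (∀ a b, f (a * b) = f a * f b) ∧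
    (∀ a b, f (S.circ a b) = S.circ (f a) (f b))

namespace SkewBraceStruct

variable {A : Type*} [Group A] (S : SkewBraceStruct A)

/-- In a group-like structure with two-sided identity and left inverses,
left inverses are also right inverses. -/
lemma circ_circInv (a : A) : S.circ a (S.circInv a) = 1 := by
  set b := S.circInv a with hb
  set c := S.circInv b with hc
  calc S.circ a b = S.circ (S.circ c b) (S.circ a b) := by
        rw [hc, S.circInv_circ, S.one_circ]
    _ = S.circ c (S.circ (S.circ b a) b) := by
        rw [S.circ_assoc, ← S.circ_assoc b a b]
    _ = S.circ c b := by rw [hb, S.circInv_circ, S.one_circ]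
    _ = 1 := by rw [hc, S.circInv_circ]

end SkewBraceStruct

/-- A two-sided skew brace of order at least `3` with `(A, ∘)` non-abelian has a
non-trivial automorphism group. -/
theorem twoSided_nonabelian_aut_nontrivial {A : Type*} [Group A] (S : SkewBraceStruct A)
    (htwo : ∀ a b c : A, S.circ (b * c) a = S.circ b a * a⁻¹ * S.circ c a)
    (hcard : ∃ x y z : A, x ≠ y ∧ x ≠ z ∧ y ≠ z)
    (hnab : ∃ a b : A, S.circ a b ≠ S.circ b a) :
    ∃ f : A → A, S.IsAut f ∧ f ≠ id := by
  obtain ⟨a, q, hq⟩ := hnab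
  set b := S.circInv a with hb
  -- conjugation by `a` in the circle group
  set f : A → A := fun x => S.circ a (S.circ x b) with hf
  set g : A → A := fun x => S.circ b (S.circ x a) with hg
  have hba : S.circ b a = 1 := S.circInv_circ a
  have hab : S.circ a b = 1 := S.circ_circInv a
  -- cancellation lemmas
  have hgf : ∀ x, g (f x) = x := by
    intro x
    simp only [hf, hg]
    rw [S.circ_assoc, S.circ_assoc, hba, S.circ_one, ← S.circ_assoc, hba, S.one_circ]
  have hfg : ∀ x, f (g x) = x := by
    intro x
    simp only [hf, hg]
    rw [S.circ_assoc, S.circ_assoc, hab, S.circ_one, ← S.circ_assoc, hab, S.one_circ]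
  have hbij : Function.Bijective f :=
    ⟨Function.LeftInverse.injective hgf, Function.RightInverse.surjective hfg⟩
  have hone : f 1 = 1 := by simp only [hf]; rw [S.one_circ, hab]
  -- multiplicativity
  set c : A := a⁻¹ * S.circ a b⁻¹ * a⁻¹ with hcdef
  have hkey : ∀ x y, f (x * y) = f x * c * f y := by
    intro x y
    simp only [hf]
    rw [htwo b x y, S.brace, S.brace]
    simp only [hcdef]
    group
  have hc1 : c = 1 := by
    have h := hkey 1 1
    rw [one_mul, hone, one_mul, mul_one] at h
    exact h.symm
  have hmul : ∀ x y, f (x * y) = f x * f y := by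
    intro x y
    rw [hkey, hc1, mul_one]
  -- circle multiplicativity
  have hcirc : ∀ x y, f (S.circ x y) = S.circ (f x) (f y) := by
    intro x y
    simp only [hf]
    rw [S.circ_assoc x y b, S.circ_assoc a (S.circ x b), S.circ_assoc x b,
      ← S.circ_assoc b a, hba, S.one_circ]
  refine ⟨f, ⟨hbij, hmul, hcirc⟩, ?_⟩
  intro hid
  apply hq
  have hfq : f q = q := by rw [hid]; rfl
  have : S.circ (f q) a = S.circ q a := by rw [hfq]
  rw [hf] at this
  simp only at this
  rw [S.circ_assoc, S.circ_assoc, hba, S.circ_one] at this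
  exact this
end

section
/- Let A = (A,·,∘) be a skew brace. Then ker(ρ) is invariant under the image of λ: for every a ∈ A and every x ∈ A with ρ_x = id, one has ρ_{λ_a(x)} = id. -/
/-- The map `λ_a : b ↦ a⁻¹ · (a ∘ b)`. -/
def SkewBraceStruct.lam {A : Type*} [Group A] (S : SkewBraceStruct A) (a b : A) : A :=
  a⁻¹ * S.circ a b

/-- The map `ρ_a : b ↦ (a ∘ b) · a⁻¹`. -/
def SkewBraceStruct.rho {A : Type*} [Group A] (S : SkewBraceStruct A) (a b : A) : A :=
  S.circ a b * a⁻¹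


/-- `ker ρ` is invariant under the image of `λ`: if `ρ_x = id` then `ρ_{λ_a(x)} = id`. -/
theorem ker_rho_invariant_lam {A : Type*} [Group A] (S : SkewBraceStruct A)
    (a x : A) (hx : S.rho x = id) :
    S.rho (S.lam a x) = id := by
  -- circ is a group operation: derive right inverse
  have hri : ∀ b : A, S.circ b (S.circInv b) = 1 := by
    intro b
    have h1 : S.circ (S.circInv (S.circInv b))
        (S.circ (S.circInv b) (S.circ b (S.circInv b))) = S.circ b (S.circInv b) := by
      rw [← S.circ_assoc, S.circInv_circ, S.one_circ]
    calc S.circ b (S.circInv b)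
        = S.circ (S.circInv (S.circInv b)) (S.circ (S.circInv b) (S.circ b (S.circInv b))) :=
          h1.symm
      _ = S.circ (S.circInv (S.circInv b)) (S.circInv b) := by
          rw [← S.circ_assoc (S.circInv b) b, S.circInv_circ, S.one_circ]
      _ = 1 := S.circInv_circ _
  -- hypothesis unfolded: x ∘ d = d * x
  have hx' : ∀ d : A, S.circ x d = d * x := by
    intro d
    have := congrFun hx d
    simp only [SkewBraceStruct.rho, id] at this
    calc S.circ x d = S.circ x d * x⁻¹ * x := by group
      _ = d * x := by rw [this]
  set y := S.lam a x with hy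
  have hyval : y = a⁻¹ * S.circ a x := rfl
  -- key: y = a ∘ x ∘ ā
  have hkey : S.circ (S.circ a x) (S.circInv a) = y := by
    rw [S.circ_assoc, hx' (S.circInv a), S.brace, hri a, one_mul, hyval]
  -- main computation: y ∘ b = b * y
  have hmain : ∀ b : A, S.circ y b = b * y := by
    intro b
    have : S.circ y b = S.circ (S.circ a x) (S.circ (S.circInv a) b) := by
      rw [← hkey, S.circ_assoc]
    rw [this, S.circ_assoc, hx' (S.circ (S.circInv a) b), S.brace,
      ← S.circ_assoc, hri a, S.one_circ, hyval]
    group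
  funext b
  simp only [SkewBraceStruct.rho, hmain b, id]
  group
end

section
/- Let A = (A,·,∘) be a two-sided skew brace. For every a ∈ A, the map ι_a : A → A defined by ι_a(b) = ā ∘ b ∘ a is an automorphism of the group (A,·); since it is also an inner automorphism of (A,∘), it belongs to Aut(A). -/
/-- In a two-sided skew brace, for every `a` the map `ι_a : b ↦ ā ∘ b ∘ a` is an
automorphism of `(A, ·)`, and (being also an inner automorphism of `(A, ∘)`) it
belongs to `Aut(A)`. -/
theorem twoSided_inner_is_aut {A : Type*} [Group A] (S : SkewBraceStruct A)
    (htwo : ∀ a b c : A, S.circ (b * c) a = S.circ b a * a⁻¹ * S.circ c a)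
    (a : A) :
    S.IsAut (fun b => S.circ (S.circ (S.circInv a) b) a) := by
  set b := S.circInv a with hb
  have h1 : S.circ b a = 1 := S.circInv_circ a
  have h2 : S.circ a b = 1 := by
    have h3 : S.circ (S.circInv b) b = 1 := S.circInv_circ b
    have e1 : S.circ (S.circInv b) (S.circ (S.circ b a) b) = 1 := by
      rw [h1, S.one_circ, h3]
    rw [S.circ_assoc b a b, ← S.circ_assoc (S.circInv b), h3, S.one_circ] at e1
    exact e1
  have h1' : ∀ z, S.circ b (S.circ a z) = z := fun z => by
    rw [← S.circ_assoc, h1, S.one_circ]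
  have h2' : ∀ z, S.circ a (S.circ b z) = z := fun z => by
    rw [← S.circ_assoc, h2, S.one_circ]
  have hinv : S.circ b a⁻¹ = b * b := by
    have h := S.brace b a a⁻¹
    rw [mul_inv_cancel, S.circ_one, h1, one_mul] at h
    calc S.circ b a⁻¹ = b * (b⁻¹ * S.circ b a⁻¹) := (mul_inv_cancel_left _ _).symm
      _ = b * b := by rw [← h]
  refine ⟨?_, ?_, ?_⟩
  · refine Function.bijective_iff_has_inverse.mpr
      ⟨fun c => S.circ (S.circ a c) b, fun x => ?_, fun x => ?_⟩ <;>
      simp only [S.circ_assoc, h1', h2', h1, h2, S.circ_one]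
  · intro x y
    simp only [S.circ_assoc]
    rw [htwo, S.brace, S.brace, hinv]
    group
  · intro x y
    simp only [S.circ_assoc, h2']
end

section
/- Let A = (A,·,∘) be a bi-skew brace. For every a, b ∈ A, one has ā ∘ (a · b) = λ_a⁻¹(b); in particular, the map b ↦ ā ∘ (a·b) equals the inverse of λ_a, and λ_a is an automorphism of the group (A,∘). -/
/-- In a bi-skew brace, `ā ∘ (a · b) = λ_a⁻¹(b)` for all `a, b`; in particular the map
`b ↦ ā ∘ (a · b)` is the inverse of `λ_a`, and `λ_a` is an automorphism of `(A, ∘)`. -/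
theorem biSkewBrace_lam_inv {A : Type*} [Group A] (S : SkewBraceStruct A)
    (hbi : ∀ a b c : A, a * S.circ b c = S.circ (S.circ (a * b) (S.circInv a)) (a * c))
    (a : A) :
    (∀ b, S.circ (S.circInv a) (a * b) = Function.invFun (S.lam a) b) ∧
    Function.LeftInverse (fun b => S.circ (S.circInv a) (a * b)) (S.lam a) ∧
    Function.RightInverse (fun b => S.circ (S.circInv a) (a * b)) (S.lam a) ∧
    Function.Bijective (S.lam a) ∧
    (∀ b c, S.lam a (S.circ b c) = S.circ (S.lam a b) (S.lam a c)) := by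
  -- `circ x (circInv x) = 1`
  have hcc : ∀ x : A, S.circ x (S.circInv x) = 1 := by
    intro x
    calc S.circ x (S.circInv x)
        = S.circ (S.circ (S.circInv (S.circInv x)) (S.circInv x)) (S.circ x (S.circInv x)) := by
          rw [S.circInv_circ, S.one_circ]
      _ = S.circ (S.circInv (S.circInv x)) (S.circ (S.circ (S.circInv x) x) (S.circInv x)) := by
          rw [S.circ_assoc, S.circ_assoc]
      _ = 1 := by rw [S.circInv_circ, S.one_circ, S.circInv_circ]
  set μ : A → A := fun b => S.circ (S.circInv a) (a * b) with hμ
  have hlmul : ∀ b, μ (S.lam a b) = b := by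
    intro b
    simp only [hμ, SkewBraceStruct.lam, mul_inv_cancel_left, ← S.circ_assoc,
      S.circInv_circ, S.one_circ]
  have hlmur : ∀ b, S.lam a (μ b) = b := by
    intro b
    simp only [hμ, SkewBraceStruct.lam, ← S.circ_assoc, hcc, S.one_circ,
      inv_mul_cancel_left]
  have hsurj : Function.Surjective (S.lam a) := fun b => ⟨μ b, hlmur b⟩
  have hinv : ∀ b, μ b = Function.invFun (S.lam a) b := by
    intro b
    conv_lhs => rw [← Function.invFun_eq (hsurj b), hlmul]
  have hbij : Function.Bijective (S.lam a) :=
    ⟨Function.LeftInverse.injective hlmul, hsurj⟩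
  have hμhom : ∀ b c, μ (S.circ b c) = S.circ (μ b) (μ c) := by
    intro b c
    simp only [hμ, hbi a b c, ← S.circ_assoc]
  refine ⟨hinv, hlmul, hlmur, hbij, fun b c => ?_⟩
  calc S.lam a (S.circ b c)
      = S.lam a (S.circ (μ (S.lam a b)) (μ (S.lam a c))) := by rw [hlmul, hlmul]
    _ = S.lam a (μ (S.circ (S.lam a b) (S.lam a c))) := by rw [hμhom]
    _ = S.circ (S.lam a b) (S.lam a c) := hlmur _
end

section
/- Let A = (A,·,∘) be a bi-skew brace. Then for all a, b ∈ A one has λ_{λ_a(b)} = λ_a ∘ λ_b ∘ λ_a⁻¹ (composition of maps A → A); consequently, λ_a ∈ Aut(A) for every a ∈ A. -/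
namespace SkewBraceStruct

variable {A : Type*} [Group A] (S : SkewBraceStruct A)

lemma circ_inv (a b : A) : S.circ a b⁻¹ = a * (S.circ a b)⁻¹ * a := by
  have h := S.brace a b⁻¹ b
  rw [inv_mul_cancel, S.circ_one] at h
  calc S.circ a b⁻¹
      = (S.circ a b⁻¹ * a⁻¹ * S.circ a b) * (S.circ a b)⁻¹ * a := by group
    _ = a * (S.circ a b)⁻¹ * a := by rw [← h]

lemma lam_comp (a b c : A) : S.lam a (S.lam b c) = S.lam (S.circ a b) c := by
  unfold lam
  rw [S.brace, S.circ_inv, S.circ_assoc]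
  group

lemma lam_one (b : A) : S.lam 1 b = b := by simp [lam, S.one_circ]

lemma lam_mul (a b c : A) : S.lam a (b * c) = S.lam a b * S.lam a c := by
  unfold lam
  rw [S.brace]
  group

lemma lam_circInv_left (a x : A) : S.lam (S.circInv a) (S.lam a x) = x := by
  rw [S.lam_comp, S.circInv_circ, S.lam_one]

lemma lam_circInv_right (a x : A) : S.lam a (S.lam (S.circInv a) x) = x := by
  rw [S.lam_comp, S.circ_circInv, S.lam_one]

end SkewBraceStruct

/-- In a bi-skew brace, `λ_{λ_a(b)} = λ_a ∘ λ_b ∘ λ_a⁻¹` for all `a, b`; consequently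
`λ_a ∈ Aut(A)` for every `a`. -/
theorem biSkewBrace_lam_is_aut {A : Type*} [Group A] (S : SkewBraceStruct A)
    (hbi : ∀ a b c : A, a * S.circ b c = S.circ (S.circ (a * b) (S.circInv a)) (a * c)) :
    (∀ a b, S.lam (S.lam a b) = S.lam a ∘ S.lam b ∘ Function.invFun (S.lam a)) ∧
    ∀ a, S.IsAut (S.lam a) := by
  -- identity (★): circ (a*b) (circInv a) = a * circ b a⁻¹
  have hstar : ∀ a b : A, S.circ (a * b) (S.circInv a) = a * S.circ b a⁻¹ := by
    intro a b
    have h := hbi a b a⁻¹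
    rw [mul_inv_cancel, S.circ_one] at h
    exact h.symm
  -- H: circ (a * circ b a⁻¹) z = a * circ b (a⁻¹ * z)
  have hH : ∀ a b z : A, S.circ (a * S.circ b a⁻¹) z = a * S.circ b (a⁻¹ * z) := by
    intro a b z
    have h := hbi a b (a⁻¹ * z)
    rw [hstar, mul_inv_cancel_left] at h
    exact h.symm
  -- lam preserves circ
  have hcirc : ∀ a b c : A, S.lam a (S.circ b c) = S.circ (S.lam a b) (S.lam a c) := by
    intro a b c
    have key : a * S.circ (S.lam a b) (S.lam a c) = a * S.lam a (S.circ b c) := by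
      have h := hbi a (S.lam a b) (S.lam a c)
      have e1 : a * S.lam a b = S.circ a b := by rw [SkewBraceStruct.lam]; group
      have e2 : a * S.lam a c = S.circ a c := by rw [SkewBraceStruct.lam]; group
      rw [e1, e2] at h
      rw [h, S.circ_assoc, ← S.circ_assoc (S.circInv a), S.circInv_circ, S.one_circ,
        S.circ_assoc]
      rw [SkewBraceStruct.lam]; group
    exact (mul_left_cancel key).symm
  -- main pointwise identity: lam (lam a b) x = lam (a∘b∘ā) x
  have hmain : ∀ a b x : A, S.lam (S.lam a b) x
      = S.lam (S.circ (S.circ a b) (S.circInv a)) x := by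
    intro a b x
    set v := S.circ (S.circ a b) (S.circInv a) with hv
    have hva : S.circ v a = S.circ a b := by
      rw [hv, S.circ_assoc, S.circInv_circ, S.circ_one]
    have hu : S.lam a b = a⁻¹ * S.circ v (a⁻¹)⁻¹ := by
      rw [inv_inv, hva, SkewBraceStruct.lam]
    have hcx : S.circ (S.lam a b) x = a⁻¹ * S.circ v (a * x) := by
      rw [hu, hH a⁻¹ v x, inv_inv]
    rw [SkewBraceStruct.lam, hcx, hu, inv_inv, S.brace v a x, SkewBraceStruct.lam]
    group
  constructor
  · intro a b
    funext x
    have hinv : Function.invFun (S.lam a) x = S.lam (S.circInv a) x := by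
      have hbij : Function.Bijective (S.lam a) := by
        refine ⟨Function.LeftInverse.injective (g := S.lam (S.circInv a)) ?_,
          Function.RightInverse.surjective (g := S.lam (S.circInv a)) ?_⟩
        · intro y; exact S.lam_circInv_left a y
        · intro y; exact S.lam_circInv_right a y
      have h1 : S.lam a (Function.invFun (S.lam a) x) = x :=
        Function.rightInverse_invFun hbij.2 x
      have h2 : S.lam a (S.lam (S.circInv a) x) = x := S.lam_circInv_right a x
      exact hbij.1 (h1.trans h2.symm)
    simp only [Function.comp_apply, hinv, hmain a b x, S.lam_comp, S.circ_assoc]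
  · intro a
    refine ⟨⟨Function.LeftInverse.injective (g := S.lam (S.circInv a))
        (fun y => S.lam_circInv_left a y),
      Function.RightInverse.surjective (g := S.lam (S.circInv a))
        (fun y => S.lam_circInv_right a y)⟩,
      fun b c => S.lam_mul a b c, fun b c => hcirc a b c⟩
end

section
/- Let B = (B,+,∘) be a skew brace whose additive group (B,+) is abelian, and let C = (C,·) be a group. Let φ, γ : C → Aut(B,+) and ψ : C → Aut(B,∘) be group homomorphisms such that for all b ∈ B and c, c' ∈ C: (i) γ_c ∘ λ_{ψ_c⁻¹(b)} = λ_b ∘ γ_c, (ii) φ_c ∘ λ_b = λ_b ∘ φ_c, (iii) φ_c ∘ γ_{c'} = γ_{c'} ∘ φ_c, and (iv) φ_{c'}((γ_{cc'}∘ψ_{cc'}⁻¹)(b) − (γ_{c'}∘ψ_{c'}⁻¹)(b)) = (γ_c∘ψ_c⁻¹)(b) − b, where − is subtraction in (B,+). Define operations on B × C by (b,c) · (b',c') = (b + φ_c(b'), cc') and ((φ_cγ_c)(b), c) ∘ ((φ_{c'}γ_{c'})(b'), c') = ((φ_{cc'}γ_{cc'})(ψ_{c'}⁻¹(b) ∘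 b'), cc') for b,b' ∈ B and c,c' ∈ C (equivalently, (b,c) ∘ (b',c') = ((φ_{cc'}γ_{cc'})(ψ_{c'}⁻¹((γ_c⁻¹φ_c⁻¹)(b)) ∘ (γ_{c'}⁻¹φ_{c'}⁻¹)(b')), cc')). Then (B × C, ·, ∘) is a skew brace. -/
/-- A skew brace structure whose additive group is the given abelian group `(B, +)`:
a second group operation `circ` with identity `0`, satisfying the brace relation
`a ∘ (b + c) = (a ∘ b) - a + (a ∘ c)`. -/
structure AddSkewBrace (B : Type*) [AddCommGroup B] where
  circ : B → B → B
  circInv : B → B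
  circ_assoc : ∀ a b c, circ (circ a b) c = circ a (circ b c)
  zero_circ : ∀ a, circ 0 a = a
  circ_zero : ∀ a, circ a 0 = a
  circInv_circ : ∀ a, circ (circInv a) a = 0
  brace : ∀ a b c, circ a (b + c) = circ a b + -a + circ a c

/-- The map `λ_b : b' ↦ -b + (b ∘ b')`. -/
def AddSkewBrace.lam {B : Type*} [AddCommGroup B] (S : AddSkewBrace B) (b b' : B) : B :=
  -b + S.circ b b'

/-- A pair of binary operations `dot`, `circ` on a set `A` forms a skew brace:
both make `A` a group, the two groups share the same identity element, and the
brace relation `a ∘ (b · c) = (a ∘ b) · a⁻¹ · (a ∘ c)` holds. -/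
def IsSkewBraceOps {A : Type*} (dot circ : A → A → A) : Prop :=
  ∃ (e : A) (dinv cinv : A → A),
    (∀ a b c, dot (dot a b) c = dot a (dot b c)) ∧
    (∀ a, dot e a = a) ∧ (∀ a, dot a e = a) ∧ (∀ a, dot (dinv a) a = e) ∧
    (∀ a b c, circ (circ a b) c = circ a (circ b c)) ∧
    (∀ a, circ e a = a) ∧ (∀ a, circ a e = a) ∧ (∀ a, circ (cinv a) a = e) ∧
    (∀ a b c, circ a (dot b c) = dot (dot (circ a b) (dinv a)) (circ a c))

/-- The semidirect-type construction: given a skew brace `B` with abelian additive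
group, a group `C`, and homomorphisms `φ, γ : C → Aut(B,+)`, `ψ : C → Aut(B,∘)`
satisfying conditions (i)–(iv), the operations
`(b,c) · (b',c') = (b + φ_c(b'), cc')` and
`(b,c) ∘ (b',c') = ((φ_{cc'}γ_{cc'})(ψ_{c'}⁻¹((γ_c⁻¹φ_c⁻¹)(b)) ∘ (γ_{c'}⁻¹φ_{c'}⁻¹)(b')), cc')`
make `B × C` a skew brace. -/
theorem skewBrace_construction {B C : Type*} [AddCommGroup B] [Group C]
    (S : AddSkewBrace B) (φ γ ψ : C → B ≃ B)
    (hφadd : ∀ c b b', φ c (b + b') = φ c b + φ c b')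
    (hγadd : ∀ c b b', γ c (b + b') = γ c b + γ c b')
    (hψcirc : ∀ c b b', ψ c (S.circ b b') = S.circ (ψ c b) (ψ c b'))
    (hφhom : ∀ c c' b, φ (c * c') b = φ c (φ c' b))
    (hγhom : ∀ c c' b, γ (c * c') b = γ c (γ c' b))
    (hψhom : ∀ c c' b, ψ (c * c') b = ψ c (ψ c' b))
    (h1 : ∀ c b b', γ c (S.lam ((ψ c).symm b) b') = S.lam b (γ c b'))
    (h2 : ∀ c b b', φ c (S.lam b b') = S.lam b (φ c b'))
    (h3 : ∀ c c' b, φ c (γ c' b) = γ c' (φ c b))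
    (h4 : ∀ c c' b, φ c' (γ (c * c') ((ψ (c * c')).symm b) - γ c' ((ψ c').symm b)) =
            γ c ((ψ c).symm b) - b) :
    IsSkewBraceOps
      (fun p q : B × C => (p.1 + φ p.2 q.1, p.2 * q.2))
      (fun p q : B × C =>
        (φ (p.2 * q.2) (γ (p.2 * q.2)
          (S.circ ((ψ q.2).symm ((γ p.2).symm ((φ p.2).symm p.1)))
            ((γ q.2).symm ((φ q.2).symm q.1)))), p.2 * q.2)) := by

  -- basic consequences of the hypotheses
  have hφ1 : ∀ b, φ 1 b = b := fun b => (φ 1).injective (by rw [← hφhom, one_mul])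
  have hγ1 : ∀ b, γ 1 b = b := fun b => (γ 1).injective (by rw [← hγhom, one_mul])
  have hψ1 : ∀ b, ψ 1 b = b := fun b => (ψ 1).injective (by rw [← hψhom, one_mul])
  have hφc1 : ∀ c x, φ c⁻¹ (φ c x) = x := fun c x => by rw [← hφhom, inv_mul_cancel, hφ1]
  have hφc2 : ∀ c x, φ c (φ c⁻¹ x) = x := fun c x => by rw [← hφhom, mul_inv_cancel, hφ1]
  have hγc1 : ∀ c x, γ c⁻¹ (γ c x) = x := fun c x => by rw [← hγhom, inv_mul_cancel, hγ1]
  have hγc2 : ∀ c x, γ c (γ c⁻¹ x) = x := fun c x => by rw [← hγhom, mul_inv_cancel, hγ1]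
  have hψc1 : ∀ c x, ψ c⁻¹ (ψ c x) = x := fun c x => by rw [← hψhom, inv_mul_cancel, hψ1]
  have hψc2 : ∀ c x, ψ c (ψ c⁻¹ x) = x := fun c x => by rw [← hψhom, mul_inv_cancel, hψ1]
  have hφsymm : ∀ c b, (φ c).symm b = φ c⁻¹ b := fun c b =>
    (φ c).injective (by rw [Equiv.apply_symm_apply, hφc2])
  have hγsymm : ∀ c b, (γ c).symm b = γ c⁻¹ b := fun c b =>
    (γ c).injective (by rw [Equiv.apply_symm_apply, hγc2])
  have hψsymm : ∀ c b, (ψ c).symm b = ψ c⁻¹ b := fun c b =>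
    (ψ c).injective (by rw [Equiv.apply_symm_apply, hψc2])
  have hφ0 : ∀ c, φ c (0 : B) = 0 := by
    intro c
    have h := hφadd c 0 0
    rw [add_zero] at h
    have h' := h.symm
    rwa [add_eq_left] at h'
  have hγ0 : ∀ c, γ c (0 : B) = 0 := by
    intro c
    have h := hγadd c 0 0
    rw [add_zero] at h
    have h' := h.symm
    rwa [add_eq_left] at h'
  have hψ0 : ∀ c, ψ c (0 : B) = 0 := by
    intro c
    have h := hψcirc c 0 0
    rw [S.zero_circ] at h
    have key : (0 : B) = ψ c 0 := by
      calc (0 : B) = S.circ (S.circInv (ψ c 0)) (ψ c 0) := (S.circInv_circ _).symm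
        _ = S.circ (S.circInv (ψ c 0)) (S.circ (ψ c 0) (ψ c 0)) := by rw [← h]
        _ = S.circ (S.circ (S.circInv (ψ c 0)) (ψ c 0)) (ψ c 0) := (S.circ_assoc _ _ _).symm
        _ = ψ c 0 := by rw [S.circInv_circ, S.zero_circ]
    exact key.symm
  have hφneg : ∀ c (x : B), φ c (-x) = -(φ c x) := fun c x =>
    eq_neg_of_add_eq_zero_left (by rw [← hφadd, neg_add_cancel, hφ0])
  have hγneg : ∀ c (x : B), γ c (-x) = -(γ c x) := fun c x =>
    eq_neg_of_add_eq_zero_left (by rw [← hγadd, neg_add_cancel, hγ0])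
  have hφsub : ∀ c (x y : B), φ c (x - y) = φ c x - φ c y := fun c x y => by
    rw [sub_eq_add_neg, hφadd, hφneg, sub_eq_add_neg]
  have hγsub : ∀ c (x y : B), γ c (x - y) = γ c x - γ c y := fun c x y => by
    rw [sub_eq_add_neg, hγadd, hγneg, sub_eq_add_neg]
  have lam_add : ∀ b x y, S.lam b (x + y) = S.lam b x + S.lam b y := fun b x y => by
    simp only [AddSkewBrace.lam, S.brace]; abel
  have circ_eq : ∀ b x, S.circ b x = b + S.lam b x := fun b x => by
    rw [AddSkewBrace.lam, add_neg_cancel_left]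
  have h1' : ∀ c w x, γ c (S.lam w x) = S.lam (ψ c w) (γ c x) := fun c w x => by
    have h := h1 c (ψ c w) x
    rwa [Equiv.symm_apply_apply] at h
  refine ⟨((0 : B), (1 : C)), fun p => (-(φ p.2⁻¹ p.1), p.2⁻¹),
    fun p => (φ p.2⁻¹ (γ p.2⁻¹ (ψ p.2 (S.circInv ((γ p.2).symm ((φ p.2).symm p.1))))), p.2⁻¹),
    ?_, ?_, ?_, ?_, ?_, ?_, ?_, ?_, ?_⟩
  · intro a b c
    simp [Prod.ext_iff, hφadd, hφhom, mul_assoc, add_assoc]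
  · intro a
    simp [Prod.ext_iff, hφ1]
  · intro a
    simp [Prod.ext_iff, hφ0]
  · intro a
    simp [Prod.ext_iff]
  · intro a b c
    simp [Prod.ext_iff, hφsymm, hγsymm, hψsymm, mul_inv_rev, hφhom, hγhom, hψhom,
      hφc1, hφc2, hγc1, hγc2, hψc1, hψc2, hψcirc, S.circ_assoc, mul_assoc]
  · intro a
    simp [Prod.ext_iff, hφsymm, hγsymm, hψsymm, hφ0, hγ0, hψ0, S.zero_circ,
      hγc2, hφc2]
  · intro a
    simp [Prod.ext_iff, hφsymm, hγsymm, hψsymm, hφ0, hγ0, inv_one, hψ1, S.circ_zero,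
      hγc2, hφc2]
  · intro a
    simp [Prod.ext_iff, hφsymm, hγsymm, hψsymm, inv_inv, hφc1, hφc2, hγc1, hγc2,
      hψc1, hψc2, S.circInv_circ, inv_mul_cancel, hφ1, hγ1, hγ0, hφ0]
  · intro a b c
    obtain ⟨a₁, p⟩ := a
    obtain ⟨b₁, q⟩ := b
    obtain ⟨c₁, r⟩ := c
    obtain ⟨A, rfl⟩ : ∃ x, a₁ = φ p (γ p x) := ⟨(γ p).symm ((φ p).symm a₁), by simp⟩
    obtain ⟨β, rfl⟩ : ∃ x, b₁ = φ q (γ q x) := ⟨(γ q).symm ((φ q).symm b₁), by simp⟩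
    obtain ⟨δ, rfl⟩ : ∃ x, c₁ = φ r (γ r x) := ⟨(γ r).symm ((φ r).symm c₁), by simp⟩
    have hconst : φ p (φ q (φ r (γ p (γ q (γ r (ψ r⁻¹ (ψ q⁻¹ A))))))) =
        φ p (φ q (γ p (γ q (ψ q⁻¹ A)))) - φ p (φ q (γ p A)) +
          φ p (φ q (φ r (γ p (γ r (ψ r⁻¹ A))))) := by
      have e1 := h4 q r A
      simp only [hψsymm, mul_inv_rev, hψhom, hγhom, hφsub] at e1
      have e2 := eq_add_of_sub_eq e1
      calc φ p (φ q (φ r (γ p (γ q (γ r (ψ r⁻¹ (ψ q⁻¹ A)))))))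
          = φ p (φ q (γ p (φ r (γ q (γ r (ψ r⁻¹ (ψ q⁻¹ A))))))) := by rw [h3]
        _ = φ p (φ q (γ p (γ q (ψ q⁻¹ A) - A + φ r (γ r (ψ r⁻¹ A))))) := by rw [e2]
        _ = _ := by simp only [hγadd, hγsub, hφadd, hφsub, ← h3]
    simp only [Equiv.symm_apply_apply, Prod.mk.injEq]
    refine ⟨?_, by simp [mul_assoc]⟩
    simp only [hφsymm, hγsymm, hψsymm, mul_inv_rev, hφhom, hγhom, hψhom,
      circ_eq, lam_add, h1', ← h2, ← h3, hφadd, hγadd, hφneg, hγneg,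
      hφc1, hφc2, hγc1, hγc2, hψc1, hψc2]
    rw [hconst]
    abel
end

section
/- In the setting of the semidirect-type construction (skew brace B = (B,+,∘) with (B,+) abelian, group C, homomorphisms φ,γ : C → Aut(B,+), ψ : C → Aut(B,∘) satisfying conditions (i)–(iv), and the skew brace A = (B × C, ·, ∘) so constructed): let f ∈ Aut(A) and β ∈ Aut(B) (an automorphism of both (B,+) and (B,∘)) be such that f(b,1) = (β(b),1) for all b ∈ B. Fix c ∈ C and write f(0,c) = ((φ_{c₀}γ_{c₀})(b₀), c₀) with b₀ ∈ B, c₀ ∈ C. Then: β ∘ φ_c = φ_{c₀} ∘ β, β ∘ γ_c = γ_{c₀} ∘ λ_{b₀} ∘ β, and (λ_{b₀}∘β)(b) − (ψ_{c₀}⁻¹∘β∘ψ_c)(b) = λ_{(ψ_{c₀}⁻¹βψ_c)(b)}(b₀) − b₀ for all b ∈ B, where − is subtraction in (B,+). -/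
/-!
Write `[b, c] = mk φ γ b c` for the element `((φ_c γ_c)(b), c)` of `A = B × C`, so that
`[x, c] ∘ [y, c'] = [ψ_{c'}⁻¹(x) ∘ y, cc']`, while `(b, 1) · (b', c) = (b + b', c)` and
`(b, c) · (b', 1) = (b + φ_c(b'), c)`. Applying `f` to `(0, c) · (b, 1) = (φ_c(b), 1) · (0, c)`
gives `β φ_c = φ_{c₀} β`. Applying `f` to `[0, c] ∘ [b, 1] = [b, c] = [ψ_c(b), 1] ∘ [0, c]` gives
`b₀ ∘ β(b) = ψ_{c₀}⁻¹(βψ_c(b)) ∘ b₀`, which is the third identity after rewriting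
`λ_a(b) = a ∘ b - a`. Comparing the first components of `f(φ_cγ_c(b), c)` computed through `·`
and through `∘` gives the second.
-/

theorem Equiv.apply_one_of_map_mul {M α : Type*} [MulOneClass M] (e : M → α ≃ α)
    (he : ∀ m m' a, e (m * m') a = e m (e m' a)) (a : α) : e 1 a = a :=
  (e 1).injective (by rw [← he, one_mul])

namespace AddSkewBrace

variable {B : Type*} [AddCommGroup B] (S : AddSkewBrace B)

theorem lam_eq_circ_sub (a b : B) : S.lam a b = S.circ a b - a := by
  rw [lam]; abel

theorem lam_sub_eq_lam_sub_of_circ_eq {a b x : B} (h : S.circ a b = S.circ x a) :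
    S.lam a b - x = S.lam x a - a := by
  rw [lam_eq_circ_sub, lam_eq_circ_sub, h]; abel

end AddSkewBrace

namespace SkewBraceConstruction

variable {B C : Type*}

def mk (φ γ : C → B ≃ B) (b : B) (c : C) : B × C := (φ c (γ c b), c)

def mul [Add B] [Mul C] (φ : C → B ≃ B) (p q : B × C) : B × C :=
  (p.1 + φ p.2 q.1, p.2 * q.2)

def circ [AddCommGroup B] [Mul C] (S : AddSkewBrace B) (φ γ ψ : C → B ≃ B) (p q : B × C) :
    B × C :=
  (φ (p.2 * q.2) (γ (p.2 * q.2)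
      (S.circ ((ψ q.2).symm ((γ p.2).symm ((φ p.2).symm p.1)))
        ((γ q.2).symm ((φ q.2).symm q.1)))), p.2 * q.2)

section Formulas

variable {φ γ : C → B ≃ B}

theorem mk_left_injective (c : C) : Function.Injective (mk φ γ · c) := fun _ _ h =>
  (γ c).injective ((φ c).injective (congrArg Prod.fst h))

theorem mk_one [One C] (hφ1 : ∀ b, φ 1 b = b) (hγ1 : ∀ b, γ 1 b = b) (b : B) :
    mk φ γ b 1 = (b, 1) := by
  simp only [mk, hφ1, hγ1]

theorem mk_zero [Zero B] {c : C} (hφ0 : φ c 0 = 0) (hγ0 : γ c 0 = 0) : mk φ γ 0 c = (0, c) := by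
  simp only [mk, hγ0, hφ0]

theorem mul_one_left [Add B] [MulOneClass C] (hφ1 : ∀ b, φ 1 b = b) (b b' : B) (c : C) :
    mul φ (b, 1) (b', c) = (b + b', c) := by
  simp only [mul, hφ1, one_mul]

theorem mul_one_right [Add B] [MulOneClass C] (p : B × C) (b : B) :
    mul φ p (b, 1) = (p.1 + φ p.2 b, p.2) := by
  simp only [mul, mul_one]

theorem circ_mk [AddCommGroup B] [Mul C] (S : AddSkewBrace B) (ψ : C → B ≃ B) (x y : B)
    (c c' : C) :
    circ S φ γ ψ (mk φ γ x c) (mk φ γ y c') = mk φ γ (S.circ ((ψ c').symm x) y) (c * c') := by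
  simp only [circ, mk, Equiv.symm_apply_apply]

end Formulas

section Automorphism

variable [AddCommGroup B] [MulOneClass C] {φ γ ψ : C → B ≃ B} {f : B × C → B × C} {β : B ≃ B}
  {c c₀ : C}

theorem apply_eq_add_of_map_mul (hφ1 : ∀ b, φ 1 b = b)
    (hfmul : ∀ p q, f (mul φ p q) = mul φ (f p) (f q)) (hfβ : ∀ b, f (b, 1) = (β b, 1))
    {d : B} (hf0 : f (0, c) = (d, c₀)) (b : B) : f (b, c) = (β b + d, c₀) := by
  have h := hfmul (b, 1) (0, c)
  rwa [mul_one_left hφ1, add_zero, hfβ, hf0, mul_one_left hφ1] at h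

theorem apply_phi_eq_add_of_map_mul (hfmul : ∀ p q, f (mul φ p q) = mul φ (f p) (f q))
    (hfβ : ∀ b, f (b, 1) = (β b, 1)) {d : B} (hf0 : f (0, c) = (d, c₀)) (b : B) :
    f (φ c b, c) = (d + φ c₀ (β b), c₀) := by
  have h := hfmul (0, c) (b, 1)
  rwa [mul_one_right, zero_add, hfβ, hf0, mul_one_right] at h

theorem comp_phi_of_map_mul (hφ1 : ∀ b, φ 1 b = b)
    (hfmul : ∀ p q, f (mul φ p q) = mul φ (f p) (f q)) (hfβ : ∀ b, f (b, 1) = (β b, 1))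
    {d : B} (hf0 : f (0, c) = (d, c₀)) (b : B) : β (φ c b) = φ c₀ (β b) := by
  have h := (apply_eq_add_of_map_mul hφ1 hfmul hfβ hf0 (φ c b)).symm.trans
    (apply_phi_eq_add_of_map_mul hfmul hfβ hf0 b)
  rw [add_comm d] at h
  exact add_right_cancel (congrArg Prod.fst h)

variable {S : AddSkewBrace B} {b₀ : B}

theorem apply_mk_eq_circ_left (hφ1 : ∀ b, φ 1 b = b) (hγ1 : ∀ b, γ 1 b = b)
    (hψ1 : ∀ b, ψ 1 b = b) (hφ0 : φ c 0 = 0) (hγ0 : γ c 0 = 0)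
    (hfcirc : ∀ p q, f (circ S φ γ ψ p q) = circ S φ γ ψ (f p) (f q))
    (hfβ : ∀ b, f (b, 1) = (β b, 1)) (hf0 : f (0, c) = mk φ γ b₀ c₀) (b : B) :
    f (mk φ γ b c) = mk φ γ (S.circ b₀ (β b)) c₀ := by
  have hψ1' : ∀ b, (ψ 1).symm b = b := fun b => (ψ 1).symm_apply_eq.mpr (hψ1 b).symm
  have h := hfcirc (0, c) (b, 1)
  rwa [← mk_zero hφ0 hγ0, ← mk_one hφ1 hγ1 b, circ_mk, hψ1', S.zero_circ, mul_one,
    mk_zero hφ0 hγ0, mk_one hφ1 hγ1, hfβ, hf0, ← mk_one hφ1 hγ1, circ_mk, hψ1', mul_one] at h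

theorem apply_mk_eq_circ_right (hφ1 : ∀ b, φ 1 b = b) (hγ1 : ∀ b, γ 1 b = b)
    (hφ0 : φ c 0 = 0) (hγ0 : γ c 0 = 0)
    (hfcirc : ∀ p q, f (circ S φ γ ψ p q) = circ S φ γ ψ (f p) (f q))
    (hfβ : ∀ b, f (b, 1) = (β b, 1)) (hf0 : f (0, c) = mk φ γ b₀ c₀) (b : B) :
    f (mk φ γ b c) = mk φ γ (S.circ ((ψ c₀).symm (β (ψ c b))) b₀) c₀ := by
  have h := hfcirc (ψ c b, 1) (0, c)
  rwa [← mk_zero hφ0 hγ0, ← mk_one hφ1 hγ1 (ψ c b), circ_mk, Equiv.symm_apply_apply,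
    S.circ_zero, one_mul, mk_zero hφ0 hγ0, mk_one hφ1 hγ1, hfβ, hf0, ← mk_one hφ1 hγ1,
    circ_mk, one_mul] at h

theorem comp_gamma_of_apply_mk (hφ1 : ∀ b, φ 1 b = b)
    (hφadd : ∀ b b', φ c₀ (b + b') = φ c₀ b + φ c₀ b')
    (hγadd : ∀ b b', γ c₀ (b + b') = γ c₀ b + γ c₀ b')
    (hfmul : ∀ p q, f (mul φ p q) = mul φ (f p) (f q)) (hfβ : ∀ b, f (b, 1) = (β b, 1))
    (hf0 : f (0, c) = mk φ γ b₀ c₀)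
    (hfmk : ∀ b, f (mk φ γ b c) = mk φ γ (S.circ b₀ (β b)) c₀) (b : B) :
    β (γ c b) = γ c₀ (S.lam b₀ (β b)) := by
  have h : φ c₀ (β (γ c b)) + φ c₀ (γ c₀ b₀) = φ c₀ (γ c₀ (S.circ b₀ (β b))) := by
    rw [← comp_phi_of_map_mul hφ1 hfmul hfβ hf0]
    exact congrArg Prod.fst ((apply_eq_add_of_map_mul hφ1 hfmul hfβ hf0 _).symm.trans (hfmk b))
  apply (φ c₀).injective
  have hγsub := (AddMonoidHom.mk' (γ c₀) hγadd).map_sub (S.circ b₀ (β b)) b₀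
  have hφsub := (AddMonoidHom.mk' (φ c₀) hφadd).map_sub (γ c₀ (S.circ b₀ (β b))) (γ c₀ b₀)
  simp only [AddMonoidHom.mk'_apply] at hγsub hφsub
  rw [S.lam_eq_circ_sub, hγsub, hφsub]
  exact eq_sub_of_add_eq h

end Automorphism

end SkewBraceConstruction

theorem skewBrace_construction_aut_constraints_general {B C : Type*} [AddCommGroup B] [Group C]
    (S : AddSkewBrace B) (φ γ ψ : C → B ≃ B)
    (hφadd : ∀ c b b', φ c (b + b') = φ c b + φ c b')
    (hγadd : ∀ c b b', γ c (b + b') = γ c b + γ c b')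
    (hφhom : ∀ c c' b, φ (c * c') b = φ c (φ c' b))
    (hγhom : ∀ c c' b, γ (c * c') b = γ c (γ c' b))
    (hψhom : ∀ c c' b, ψ (c * c') b = ψ c (ψ c' b))
    -- `f` is an automorphism of the constructed skew brace `A = B × C`:
    (f : B × C → B × C)
    (hfdot : ∀ p q : B × C,
      f (p.1 + φ p.2 q.1, p.2 * q.2) = ((f p).1 + φ (f p).2 (f q).1, (f p).2 * (f q).2))
    (hfcirc : ∀ p q : B × C,
      f (φ (p.2 * q.2) (γ (p.2 * q.2)
          (S.circ ((ψ q.2).symm ((γ p.2).symm ((φ p.2).symm p.1)))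
            ((γ q.2).symm ((φ q.2).symm q.1)))), p.2 * q.2)
        = (φ ((f p).2 * (f q).2) (γ ((f p).2 * (f q).2)
            (S.circ ((ψ (f q).2).symm ((γ (f p).2).symm ((φ (f p).2).symm (f p).1)))
              ((γ (f q).2).symm ((φ (f q).2).symm (f q).1)))), (f p).2 * (f q).2))
    -- `β` is an automorphism of the skew brace `B` describing `f` on `B × {1}`:
    (β : B ≃ B)
    (hfβ : ∀ b : B, f (b, 1) = (β b, 1))
    (c c₀ : C) (b₀ : B) (hf0 : f (0, c) = (φ c₀ (γ c₀ b₀), c₀)) :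
    (∀ b, β (φ c b) = φ c₀ (β b)) ∧
    (∀ b, β (γ c b) = γ c₀ (S.lam b₀ (β b))) ∧
    (∀ b, S.lam b₀ (β b) - (ψ c₀).symm (β (ψ c b)) =
      S.lam ((ψ c₀).symm (β (ψ c b))) b₀ - b₀) := by
  have hφ1 := Equiv.apply_one_of_map_mul φ hφhom
  have hγ1 := Equiv.apply_one_of_map_mul γ hγhom
  have hψ1 := Equiv.apply_one_of_map_mul ψ hψhom
  have hφ0 : φ c 0 = 0 := (AddMonoidHom.mk' (φ c) (hφadd c)).map_zero
  have hγ0 : γ c 0 = 0 := (AddMonoidHom.mk' (γ c) (hγadd c)).map_zero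
  have hfmk_left := SkewBraceConstruction.apply_mk_eq_circ_left hφ1 hγ1 hψ1 hφ0 hγ0 hfcirc hfβ hf0
  have hfmk_right := SkewBraceConstruction.apply_mk_eq_circ_right hφ1 hγ1 hφ0 hγ0 hfcirc hfβ hf0
  refine ⟨SkewBraceConstruction.comp_phi_of_map_mul hφ1 hfdot hfβ hf0,
    SkewBraceConstruction.comp_gamma_of_apply_mk hφ1 (hφadd c₀) (hγadd c₀) hfdot hfβ hf0
      hfmk_left, fun b => ?_⟩
  exact S.lam_sub_eq_lam_sub_of_circ_eq
    (SkewBraceConstruction.mk_left_injective c₀ ((hfmk_left b).symm.trans (hfmk_right b)))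

/-- In the setting of the semidirect-type construction, if `f` is a skew brace
automorphism of `A = B × C` such that `f(b,1) = (β(b),1)` for an automorphism `β` of
the skew brace `B`, and `f(0,c) = ((φ_{c₀}γ_{c₀})(b₀), c₀)`, then
`β φ_c = φ_{c₀} β`, `β γ_c = γ_{c₀} λ_{b₀} β`, and
`(λ_{b₀}β)(b) - (ψ_{c₀}⁻¹βψ_c)(b) = λ_{(ψ_{c₀}⁻¹βψ_c)(b)}(b₀) - b₀` for all `b`. -/
theorem skewBrace_construction_aut_constraints {B C : Type*} [AddCommGroup B] [Group C]
    (S : AddSkewBrace B) (φ γ ψ : C → B ≃ B)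
    (hφadd : ∀ c b b', φ c (b + b') = φ c b + φ c b')
    (hγadd : ∀ c b b', γ c (b + b') = γ c b + γ c b')
    (hψcirc : ∀ c b b', ψ c (S.circ b b') = S.circ (ψ c b) (ψ c b'))
    (hφhom : ∀ c c' b, φ (c * c') b = φ c (φ c' b))
    (hγhom : ∀ c c' b, γ (c * c') b = γ c (γ c' b))
    (hψhom : ∀ c c' b, ψ (c * c') b = ψ c (ψ c' b))
    (h1 : ∀ c b b', γ c (S.lam ((ψ c).symm b) b') = S.lam b (γ c b'))
    (h2 : ∀ c b b', φ c (S.lam b b') = S.lam b (φ c b'))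
    (h3 : ∀ c c' b, φ c (γ c' b) = γ c' (φ c b))
    (h4 : ∀ c c' b, φ c' (γ (c * c') ((ψ (c * c')).symm b) - γ c' ((ψ c').symm b)) =
            γ c ((ψ c).symm b) - b)
    -- `f` is an automorphism of the constructed skew brace `A = B × C`:
    (f : B × C → B × C) (hfbij : Function.Bijective f)
    (hfdot : ∀ p q : B × C,
      f (p.1 + φ p.2 q.1, p.2 * q.2) = ((f p).1 + φ (f p).2 (f q).1, (f p).2 * (f q).2))
    (hfcirc : ∀ p q : B × C,
      f (φ (p.2 * q.2) (γ (p.2 * q.2)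
          (S.circ ((ψ q.2).symm ((γ p.2).symm ((φ p.2).symm p.1)))
            ((γ q.2).symm ((φ q.2).symm q.1)))), p.2 * q.2)
        = (φ ((f p).2 * (f q).2) (γ ((f p).2 * (f q).2)
            (S.circ ((ψ (f q).2).symm ((γ (f p).2).symm ((φ (f p).2).symm (f p).1)))
              ((γ (f q).2).symm ((φ (f q).2).symm (f q).1)))), (f p).2 * (f q).2))
    -- `β` is an automorphism of the skew brace `B` describing `f` on `B × {1}`:
    (β : B ≃ B) (hβadd : ∀ b b', β (b + b') = β b + β b')
    (hβcirc : ∀ b b', β (S.circ b b') = S.circ (β b) (β b'))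
    (hfβ : ∀ b : B, f (b, 1) = (β b, 1))
    (c c₀ : C) (b₀ : B) (hf0 : f (0, c) = (φ c₀ (γ c₀ b₀), c₀)) :
    (∀ b, β (φ c b) = φ c₀ (β b)) ∧
    (∀ b, β (γ c b) = γ c₀ (S.lam b₀ (β b))) ∧
    (∀ b, S.lam b₀ (β b) - (ψ c₀).symm (β (ψ c b)) =
      S.lam ((ψ c₀).symm (β (ψ c b))) b₀ - b₀) :=
  skewBrace_construction_aut_constraints_general S φ γ ψ hφadd hγadd hφhom hγhom hψhom f hfdot
    hfcirc β hfβ c c₀ b₀ hf0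
end

section
/- Let B = (𝔽₂² × 𝔽₃, +, ∘) be the skew brace where + is componentwise addition and (x, z) ∘ (y, z') = (x + Mᶻ y, z + z') with M = [[1,1],[1,0]] ∈ GL₂(𝔽₂). Identify Aut(B,+) with GL₂(𝔽₂) × 𝔽₃ˣ, acting by (N,u)·(x,z) = (Nx, uz). Then the automorphism group of the skew brace B (maps preserving both + and ∘) equals { (N,1) : N ∈ ⟨M⟩ } ∪ { (N,−1) : N ∈ GL₂(𝔽₂), N ∉ ⟨M⟩ }. -/
/-!
An additive automorphism of `𝔽₂² × 𝔽₃` preserves the factors, since they have coprime exponents,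
so it is `(x, z) ↦ (N x, u z)` with `N ∈ GL₂(𝔽₂)` and `u ∈ 𝔽₃ˣ`. Evaluating the compatibility with
`∘` at `(0, z) ∘ (y, 0)` shows that it holds exactly when `N Mᶻ = M^(u z) N` for all `z`, i.e.
`N M N⁻¹ = Mᵘ`. In `GL₂(𝔽₂) ≅ S₃` the elements commuting with `M` are those of `⟨M⟩`, and all
the others invert `M`.
-/

/-- The matrix `M = [[1,1],[1,0]]` over `𝔽₂`. -/
def MB : Matrix (Fin 2) (Fin 2) (ZMod 2) := !![1, 1; 1, 0]

/-- The multiplicative operation of the skew brace `B = (𝔽₂² × 𝔽₃, +, ∘)`: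
`(x, z) ∘ (y, z') = (x + Mᶻ y, z + z')`. -/
def circB (a b : (Fin 2 → ZMod 2) × ZMod 3) : (Fin 2 → ZMod 2) × ZMod 3 :=
  (a.1 + (MB ^ a.2.val).mulVec b.1, a.2 + b.2)

/-- `M` as an element of `GL₂(𝔽₂)`. -/
def Mgl : GL (Fin 2) (ZMod 2) := ⟨MB, MB ^ 2, by decide, by decide⟩

open Matrix

namespace AddMonoidHom

variable {V W V' W' : Type*} [AddCommGroup V] [AddCommGroup W] [AddCommGroup V']
  [AddCommGroup W'] {m n : ℕ}

theorem snd_map_inl_eq_zero_of_coprime (f : V × W →+ V' × W') (hmn : m.Coprime n)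
    (hV : ∀ v : V, m • v = 0) (hW' : ∀ w : W', n • w = 0) (x : V) : (f (x, 0)).2 = 0 :=
  (nsmul_eq_zero_iff_of_coprime hmn).1
    ⟨by rw [← Prod.smul_snd, ← map_nsmul, Prod.smul_mk, hV, smul_zero, Prod.mk_zero_zero,
      map_zero, Prod.snd_zero], hW' _⟩

theorem apply_eq_of_coprime_torsion (f : V × W →+ V' × W') (hmn : m.Coprime n)
    (hV : ∀ v : V, m • v = 0) (hW : ∀ w : W, n • w = 0)
    (hV' : ∀ v : V', m • v = 0) (hW' : ∀ w : W', n • w = 0) (x : V) (z : W) :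
    f (x, z) = ((f (x, 0)).1, (f (0, z)).2) := by
  have hfst : (f (0, z)).1 = 0 := by
    simpa using snd_map_inl_eq_zero_of_coprime
      ((AddEquiv.prodComm.toAddMonoidHom.comp f).comp AddEquiv.prodComm.toAddMonoidHom)
      hmn.symm hW hV' z
  rw [← Prod.fst_add_snd (x, z), map_add]
  ext
  · simp [hfst]
  · simp [snd_map_inl_eq_zero_of_coprime f hmn hV hW' x]

theorem exists_matrix_of_coprime {ι : Type*} [Fintype ι] [DecidableEq ι] {p q : ℕ}
    (hpq : p.Coprime q) (f : (ι → ZMod p) × ZMod q →+ (ι → ZMod p) × ZMod q) :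
    ∃ (A : Matrix ι ι (ZMod p)) (c : ZMod q), ⇑f = Prod.map A.mulVec (c * ·) := by
  let g : (ι → ZMod p) →+ (ι → ZMod p) := (fst _ _).comp (f.comp (inl _ _))
  let h : ZMod q →+ ZMod q := (snd _ _).comp (f.comp (inr _ _))
  refine ⟨LinearMap.toMatrix' (g.toZModLinearMap p), h 1, funext fun ⟨x, z⟩ => ?_⟩
  rw [Prod.map_apply, f.apply_eq_of_coprime_torsion hpq (fun v => by ext; simp) (by simp)
    (fun v => by ext; simp) (by simp), LinearMap.toMatrix'_mulVec]
  show (g x, h z) = (g x, h 1 * z)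
  rw [mul_comm]
  simpa using (h.toZModLinearMap q).map_smul z 1

end AddMonoidHom

theorem Matrix.bijective_prodMap_mulVec_mul_iff {ι K R : Type*} [Fintype ι] [DecidableEq ι]
    [Field K] [Monoid R] (A : Matrix ι ι K) (c : R) :
    Function.Bijective (Prod.map A.mulVec (c * ·)) ↔ IsUnit A ∧ IsUnit c := by
  rw [Prod.map_bijective, ← IsUnit.isUnit_iff_mulLeft_bijective, Function.Bijective,
    mulVec_injective_iff_isUnit, mulVec_surjective_iff_isUnit, and_self]

theorem map_circB_iff (A : Matrix (Fin 2) (Fin 2) (ZMod 2)) (c : ZMod 3) :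
    (∀ a b, Prod.map A.mulVec (c * ·) (circB a b) =
        circB (Prod.map A.mulVec (c * ·) a) (Prod.map A.mulVec (c * ·) b)) ↔
      ∀ z : ZMod 3, A * MB ^ z.val = MB ^ (c * z).val * A := by
  constructor
  · intro h z
    refine ext_iff_mulVec.2 fun y => ?_
    simpa only [circB, Prod.map_fst, Prod.map_snd, mulVec_zero, zero_add, mulVec_mulVec] using
      congrArg Prod.fst (h (0, z) (y, 0))
  · intro h a b
    ext1
    · simp only [circB, Prod.map_fst, Prod.map_snd, mulVec_add, mulVec_mulVec, h]
    · simp only [circB, Prod.map_snd, mul_add]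

theorem orderOf_Mgl : orderOf Mgl = 3 :=
  haveI : Fact (Nat.Prime 3) := ⟨Nat.prime_three⟩
  orderOf_eq_prime (Units.ext (by decide)) (by decide)

theorem mul_MB_pow_eq_iff (N : GL (Fin 2) (ZMod 2)) (u : (ZMod 3)ˣ) :
    (∀ z : ZMod 3,
        (N : Matrix (Fin 2) (Fin 2) (ZMod 2)) * MB ^ z.val = MB ^ (u * z : ZMod 3).val * N) ↔
      (u = 1 ∧ N ∈ Subgroup.zpowers Mgl) ∨ (u = -1 ∧ N ∉ Subgroup.zpowers Mgl) := by
  rw [mem_zpowers_iff_mem_range_orderOf, orderOf_Mgl]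
  revert N u
  decide

/-- The automorphism group of the skew brace `B = (𝔽₂² × 𝔽₃, +, ∘)` consists, under
the identification `Aut(B,+) = GL₂(𝔽₂) × 𝔽₃ˣ` with `(N, u) · (x, z) = (Nx, uz)`,
exactly of the pairs `(N, 1)` with `N ∈ ⟨M⟩` and `(N, -1)` with `N ∉ ⟨M⟩`. -/
theorem aut_of_order12_skewBrace (f : (Fin 2 → ZMod 2) × ZMod 3 → (Fin 2 → ZMod 2) × ZMod 3) :
    (Function.Bijective f ∧ (∀ a b, f (a + b) = f a + f b) ∧
      (∀ a b, f (circB a b) = circB (f a) (f b))) ↔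
    ∃ (N : GL (Fin 2) (ZMod 2)) (u : (ZMod 3)ˣ),
      (∀ (x : Fin 2 → ZMod 2) (z : ZMod 3),
        f (x, z) = ((N : Matrix (Fin 2) (Fin 2) (ZMod 2)).mulVec x, (u : ZMod 3) * z)) ∧
      ((u = 1 ∧ N ∈ Subgroup.zpowers Mgl) ∨ (u = -1 ∧ N ∉ Subgroup.zpowers Mgl)) := by
  constructor
  · rintro ⟨hbij, hadd, hcirc⟩
    obtain ⟨A, c, hf⟩ :=
      (AddMonoidHom.mk' f hadd).exists_matrix_of_coprime (by norm_num : Nat.Coprime 2 3)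
    obtain rfl : f = Prod.map A.mulVec (c * ·) := hf
    obtain ⟨hA, hc⟩ := (bijective_prodMap_mulVec_mul_iff A c).1 hbij
    exact ⟨hA.unit, hc.unit, fun x z => rfl,
      (mul_MB_pow_eq_iff _ _).1 ((map_circB_iff A c).1 hcirc)⟩
  · rintro ⟨N, u, hf, hNu⟩
    obtain rfl : f = Prod.map (N : Matrix (Fin 2) (Fin 2) (ZMod 2)).mulVec ((u : ZMod 3) * ·) :=
      funext fun p => hf p.1 p.2
    exact ⟨(bijective_prodMap_mulVec_mul_iff _ _).2 ⟨N.isUnit, u.isUnit⟩,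
      fun a b => Prod.ext (mulVec_add _ a.1 b.1) (mul_add _ a.2 b.2),
      (map_circB_iff _ _).2 ((mul_MB_pow_eq_iff N u).2 hNu)⟩
end

section
/- Let B = (𝔽₂² × 𝔽₃, +, ∘) be the skew brace with + componentwise and (x,z) ∘ (y,z') = (x + Mᶻ y, z + z') where M = [[1,1],[1,0]]. Let C = (𝔽₂,+). Identify Aut(B,+) = GL₂(𝔽₂) × 𝔽₃ˣ acting by (N,u)·(x,z) = (Nx,uz), and define homomorphisms φ, γ : C → Aut(B,+) and ψ : C → Aut(B,∘) by φ_c = id, γ_c = ([[0,1],[1,0]], −1)^c, ψ_c = ([[1,1],[0,1]], −1)^c. Let A = (B × C, ·, ∘) be the skew brace of order 24 with operations ((x,z),c) · ((x',z'),c') = ((x+x', z+z'), c+c') and (γ_c(x,z), c) ∘ (γ_{c'}(x',z'), c') = (γ_{c+c'}(ψ_{c'}⁻¹(x,z) ∘ (x',z')), c+c'). Then Aut(A) is trivial: the only bijection of B × C preserving both · and ∘ is the identity. -/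
/-- The automorphism `γ_c = ([[0,1],[1,0]], -1)^c` of `(B, +)`. -/
def gammaMap (c : ZMod 2) (b : (Fin 2 → ZMod 2) × ZMod 3) : (Fin 2 → ZMod 2) × ZMod 3 :=
  ((!![0, 1; 1, 0] : Matrix (Fin 2) (Fin 2) (ZMod 2)) ^ c.val |>.mulVec b.1,
    (-1 : ZMod 3) ^ c.val * b.2)

/-- The automorphism `ψ_c = ([[1,1],[0,1]], -1)^c` of `(B, ∘)`. -/
def psiMap (c : ZMod 2) (b : (Fin 2 → ZMod 2) × ZMod 3) : (Fin 2 → ZMod 2) × ZMod 3 :=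
  ((!![1, 1; 0, 1] : Matrix (Fin 2) (Fin 2) (ZMod 2)) ^ c.val |>.mulVec b.1,
    (-1 : ZMod 3) ^ c.val * b.2)

/-- The multiplicative operation of the skew brace `A = B × C` of order `24` obtained
from the semidirect-type construction with `φ_c = id` (note `γ_c` and `ψ_c` are
involutions, so `γ_c⁻¹ = γ_c` and `ψ_c⁻¹ = ψ_c`):
`(b, c) ∘ (b', c') = (γ_{c+c'}(ψ_{c'}(γ_c(b)) ∘ γ_{c'}(b')), c + c')`. -/
def circA (x y : ((Fin 2 → ZMod 2) × ZMod 3) × ZMod 2) :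
    ((Fin 2 → ZMod 2) × ZMod 3) × ZMod 2 :=
  (gammaMap (x.2 + y.2) (circB (psiMap y.2 (gammaMap x.2 x.1)) (gammaMap y.2 y.1)),
    x.2 + y.2)

abbrev TA := ((Fin 2 → ZMod 2) × ZMod 3) × ZMod 2

def eA1 : TA := ((![1, 0], 0), 0)
def eA2 : TA := ((![0, 1], 0), 0)
def eA3 : TA := ((![0, 0], 1), 0)
def eA4 : TA := ((![0, 0], 0), 1)

/-- additive reconstruction from values on generators -/
def Frep (v1 v2 v3 v4 : TA) (a : TA) : TA :=
  (a.1.1 0).val • v1 + (a.1.1 1).val • v2 + a.1.2.val • v3 + a.2.val • v4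

lemma rep_eq : ∀ a : TA, Frep eA1 eA2 eA3 eA4 a = a := by decide

def L2 : List TA :=
  [((![0,0],0),0), ((![0,0],0),1), ((![0,1],0),0), ((![0,1],0),1),
   ((![1,0],0),0), ((![1,0],0),1), ((![1,1],0),0), ((![1,1],0),1)]

def L3 : List TA := [((![0,0],0),0), ((![0,0],1),0), ((![0,0],2),0)]

lemma mem2 : ∀ v : TA, v + v = 0 → v ∈ L2 := by decide

lemma mem3 : ∀ v : TA, v + v + v = 0 → v ∈ L3 := by decide

def PL : List (TA × TA) :=
  [(((![0,1],2),1), ((![1,1],1),1)),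
   (((![0,1],2),0), ((![0,1],0),0)),
   (((![0,0],0),1), ((![0,1],0),1))]

def EP (v1 v2 v3 v4 : TA) (p : TA × TA) : Prop :=
  Frep v1 v2 v3 v4 (circA p.1 p.2)
    = circA (Frep v1 v2 v3 v4 p.1) (Frep v1 v2 v3 v4 p.2)

instance (v1 v2 v3 v4 : TA) (p : TA × TA) : Decidable (EP v1 v2 v3 v4 p) := by
  unfold EP; infer_instance

def goodAll : Bool :=
  L2.all fun v1 => decide (v1 = (0 : TA)) ||
    (L2.all fun v2 => L3.all fun v3 => L2.all fun v4 =>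
      !(PL.all fun p => decide (EP v1 v2 v3 v4 p))
      || (decide (v1 = eA1) && decide (v2 = eA2) && decide (v3 = eA3) && decide (v4 = eA4)))

set_option maxHeartbeats 8000000 in
lemma keyb : goodAll = true := by decide

lemma key : ∀ v1 v2 v3 v4 : TA, v1 ∈ L2 → v2 ∈ L2 → v3 ∈ L3 → v4 ∈ L2 →
    v1 ≠ 0 → (∀ p ∈ PL, EP v1 v2 v3 v4 p) →
    v1 = eA1 ∧ v2 = eA2 ∧ v3 = eA3 ∧ v4 = eA4 := by
  intro v1 v2 v3 v4 h1 h2 h3 h4 hne hE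
  have hb : (L2.all fun v1 => decide (v1 = (0 : TA)) ||
    (L2.all fun v2 => L3.all fun v3 => L2.all fun v4 =>
      !(PL.all fun p => decide (EP v1 v2 v3 v4 p))
      || (decide (v1 = eA1) && decide (v2 = eA2) && decide (v3 = eA3) && decide (v4 = eA4)))) = true := keyb
  have h := List.all_eq_true.mp hb v1 h1
  rw [Bool.or_eq_true, decide_eq_true_eq] at h
  rcases h with h | h
  · exact absurd h hne
  have h := List.all_eq_true.mp (List.all_eq_true.mp
    (List.all_eq_true.mp h v2 h2) v3 h3) v4 h4
  rw [Bool.or_eq_true, Bool.not_eq_true', Bool.and_eq_true, Bool.and_eq_true,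
    Bool.and_eq_true, decide_eq_true_eq, decide_eq_true_eq, decide_eq_true_eq,
    decide_eq_true_eq] at h
  rcases h with h | ⟨⟨⟨ha, hb'⟩, hc⟩, hd⟩
  · exfalso
    have : (PL.all fun p => decide (EP v1 v2 v3 v4 p)) = true :=
      List.all_eq_true.mpr fun p hp => decide_eq_true (hE p hp)
    rw [this] at h; exact Bool.noConfusion h
  · exact ⟨ha, hb', hc, hd⟩

/-- The skew brace of order `24` given by `(B × C, ·, ∘)`, where the additive
operation `((x,z),c) · ((x',z'),c') = ((x+x', z+z'), c+c')` is componentwise addition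
and `∘` is `circA`, has a trivial automorphism group. -/
theorem aut_of_order24_skewBrace_trivial
    (f : ((Fin 2 → ZMod 2) × ZMod 3) × ZMod 2 → ((Fin 2 → ZMod 2) × ZMod 3) × ZMod 2)
    (hbij : Function.Bijective f)
    (hadd : ∀ a b, f (a + b) = f a + f b)
    (hcirc : ∀ a b, f (circA a b) = circA (f a) (f b)) :
    f = id := by
  have h0 : f 0 = 0 := by
    have h := hadd 0 0
    rw [add_zero] at h
    exact (left_eq_add.mp h)
  set φ : TA →+ TA := AddMonoidHom.mk' f hadd with hφ
  have hf : ∀ a : TA, f a = φ a := fun a => rfl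
  have fEq : ∀ a : TA, f a = Frep (f eA1) (f eA2) (f eA3) (f eA4) a := by
    intro a
    conv_lhs => rw [← rep_eq a]
    simp only [Frep, hf, map_add, map_nsmul]
  have h2t : ∀ v : TA, v + v = 0 → f v + f v = 0 := by
    intro v hv
    rw [← hadd, hv, h0]
  have hm1 : f eA1 ∈ L2 := mem2 _ (h2t eA1 (by decide))
  have hm2 : f eA2 ∈ L2 := mem2 _ (h2t eA2 (by decide))
  have hm4 : f eA4 ∈ L2 := mem2 _ (h2t eA4 (by decide))
  have hm3 : f eA3 ∈ L3 := by
    refine mem3 _ ?_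
    rw [← hadd, ← hadd, show eA3 + eA3 + eA3 = 0 by decide, h0]
  have hne : f eA1 ≠ 0 := by
    intro h
    have : eA1 = 0 := hbij.injective (h.trans h0.symm)
    exact absurd this (by decide)
  have hP : ∀ p ∈ PL, EP (f eA1) (f eA2) (f eA3) (f eA4) p := by
    intro p _
    unfold EP
    rw [← fEq, ← fEq, ← fEq, hcirc]
  obtain ⟨h1, h2, h3, h4⟩ := key _ _ _ _ hm1 hm2 hm3 hm4 hne hP
  funext a
  rw [fEq a, h1, h2, h3, h4, rep_eq]
  rfl
end

section
/- Let p be an odd prime and let B = (𝔽_p³, +, ∘) be the skew brace where + is componentwise addition and (x₁,x₂,x₃) ∘ (y₁,y₂,y₃) = (x₁ + y₁ + x₃y₂, x₂ + y₂, x₃ + y₃). Identify Aut(B,+) = GL₃(𝔽_p). Then the automorphism group of the skew brace B (maps preserving both + and ∘) equals the set of matrices [[uv, s, t],[0, u, 0],[0, 0, v]] with u, v ∈ 𝔽_pˣ and s, t ∈ 𝔽_p. -/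
/-- The multiplicative operation of the skew brace `B = (𝔽_p³, +, ∘)`:
`(x₁,x₂,x₃) ∘ (y₁,y₂,y₃) = (x₁ + y₁ + x₃y₂, x₂ + y₂, x₃ + y₃)`. -/
def circH {p : ℕ} (x y : Fin 3 → ZMod p) : Fin 3 → ZMod p :=
  ![x 0 + y 0 + x 2 * y 1, x 1 + y 1, x 2 + y 2]

/-- For an odd prime `p`, the automorphism group of the skew brace `(𝔽_p³, +, ∘)`
consists, under the identification `Aut(B,+) = GL₃(𝔽_p)`, exactly of the matrices
`[[uv, s, t], [0, u, 0], [0, 0, v]]` with `u, v ∈ 𝔽_pˣ` and `s, t ∈ 𝔽_p`. -/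
theorem aut_of_heisenberg_skewBrace (p : ℕ) (hp : p.Prime) (hodd : Odd p)
    (f : (Fin 3 → ZMod p) → (Fin 3 → ZMod p)) :
    (Function.Bijective f ∧ (∀ x y, f (x + y) = f x + f y) ∧
      (∀ x y, f (circH x y) = circH (f x) (f y))) ↔
    ∃ (u v : (ZMod p)ˣ) (s t : ZMod p),
      f = fun x => (!![(u : ZMod p) * v, s, t; 0, u, 0; 0, 0, v]).mulVec x := by
  haveI : Fact p.Prime := ⟨hp⟩
  constructor
  · rintro ⟨hbij, hadd, hcirc⟩
    set E0 : Fin 3 → ZMod p := ![1,0,0] with hE0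
    set E1 : Fin 3 → ZMod p := ![0,1,0] with hE1
    set E2 : Fin 3 → ZMod p := ![0,0,1] with hE2
    have hf0 : f 0 = 0 := by
      have h := hadd 0 0
      rw [add_zero] at h
      exact (add_eq_left.mp h.symm)
    have hnsmul : ∀ (n : ℕ) (x : Fin 3 → ZMod p), f (n • x) = n • f x := by
      intro n
      induction n with
      | zero => intro x; simp [hf0]
      | succ n ih => intro x; rw [succ_nsmul, succ_nsmul, hadd, ih]
    have hsmul : ∀ (m : ZMod p) (x : Fin 3 → ZMod p), f (m • x) = m • f x := by
      intro m x
      have h1 : m • x = (m.val : ℕ) • x := by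
        rw [← Nat.cast_smul_eq_nsmul (ZMod p), ZMod.natCast_val, ZMod.cast_id]
      have h2 : m • f x = (m.val : ℕ) • f x := by
        rw [← Nat.cast_smul_eq_nsmul (ZMod p), ZMod.natCast_val, ZMod.cast_id]
      rw [h1, h2, hnsmul]
    have hrepr : ∀ x : Fin 3 → ZMod p, x = x 0 • E0 + x 1 • E1 + x 2 • E2 := by
      intro x; funext i; fin_cases i <;> simp [hE0, hE1, hE2]
    have hfx : ∀ (x : Fin 3 → ZMod p) (i : Fin 3),
        f x i = x 0 * f E0 i + x 1 * f E1 i + x 2 * f E2 i := by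
      intro x i
      conv_lhs => rw [hrepr x]
      rw [hadd, hadd, hsmul, hsmul, hsmul]
      simp [smul_eq_mul]
    have hcirc' : ∀ x y : Fin 3 → ZMod p, circH x y = x + y + (x 2 * y 1) • E0 := by
      intro x y; funext i; fin_cases i <;> simp [circH, hE0]
    have hK : ∀ x y : Fin 3 → ZMod p,
        (x 2 * y 1) • f E0 = (f x 2 * f y 1) • E0 := by
      intro x y
      have h := hcirc x y
      rw [hcirc' x y, hadd, hadd, hsmul, hcirc' (f x) (f y)] at h
      exact add_left_cancel h
    set u : ZMod p := f E1 1 with hu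
    set v : ZMod p := f E2 2 with hv
    set s : ZMod p := f E1 0 with hs
    set t : ZMod p := f E2 0 with ht
    have hfE0 : f E0 = (v * u) • E0 := by
      have h := hK E2 E1
      simpa [hE1, hE2] using h
    have hstar : ∀ x y : Fin 3 → ZMod p,
        f x 2 * f y 1 = v * u * (x 2 * y 1) := by
      intro x y
      have h := congrFun (hK x y) 0
      rw [hfE0] at h
      simp [hE0, smul_eq_mul] at h
      linear_combination -h
    obtain ⟨a, ha⟩ := hbij.2 E1
    obtain ⟨b, hb⟩ := hbij.2 E2
    have hE1_2 : f E1 2 = 0 := by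
      have h := hstar E1 a
      rw [ha] at h
      simpa [hE1] using h
    have hE2_1 : f E2 1 = 0 := by
      have h := hstar b E2
      rw [hb] at h
      simpa [hE2] using h
    have hvu : v * u ≠ 0 := by
      intro hc
      have : f E0 = f 0 := by rw [hfE0, hc, hf0, zero_smul]
      have hE := hbij.1 this
      have := congrFun hE 0
      simp [hE0] at this
    have hune : u ≠ 0 := fun h => hvu (by rw [h, mul_zero])
    have hvne : v ≠ 0 := fun h => hvu (by rw [h, zero_mul])
    refine ⟨Units.mk0 u hune, Units.mk0 v hvne, s, t, ?_⟩
    funext x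
    funext i
    have h0 : f E0 0 = v * u := by rw [hfE0]; simp [hE0]
    have h1 : f E0 1 = 0 := by rw [hfE0]; simp [hE0]
    have h2 : f E0 2 = 0 := by rw [hfE0]; simp [hE0]
    fin_cases i <;>
      simp [hfx x, Matrix.mulVec, dotProduct, Fin.sum_univ_three,
        h0, h1, h2, hE1_2, hE2_1, ← hu, ← hv, ← hs, ← ht] <;>
      ring
  · rintro ⟨u, v, s, t, rfl⟩
    refine ⟨?_, ?_, ?_⟩
    · rw [Finite.injective_iff_bijective.symm]
      intro x y hxy
      have hz : (!![(u : ZMod p) * v, s, t; 0, (u:ZMod p), 0; 0, 0, (v:ZMod p)]).mulVec (x - y) = 0 := by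
        rw [Matrix.mulVec_sub]
        simp only at hxy
        rw [hxy, sub_self]
      have h1 : x 1 - y 1 = 0 := by
        have := congrFun hz 1
        simp [Matrix.mulVec, dotProduct, Fin.sum_univ_three] at this
        exact this
      have h2 : x 2 - y 2 = 0 := by
        have := congrFun hz 2
        simp [Matrix.mulVec, dotProduct, Fin.sum_univ_three] at this
        exact this
      have h0 : x 0 - y 0 = 0 := by
        have h := congrFun hz 0
        simp [Matrix.mulVec, dotProduct, Fin.sum_univ_three, Pi.sub_apply] at h
        rw [h1, h2] at h
        simp at h
        tauto
      funext i
      fin_cases i <;> [skip; skip; skip] <;>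
        first
        | (exact sub_eq_zero.mp h0)
        | (exact sub_eq_zero.mp h1)
        | (exact sub_eq_zero.mp h2)
    · intro x y
      simp [Matrix.mulVec_add]
    · intro x y
      funext i
      fin_cases i <;>
        simp [circH, Matrix.mulVec, dotProduct, Fin.sum_univ_three] <;>
        ring
end
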